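/- Let α, τ, η, β be real numbers with α ∈ (0,2), α ≠ 1, η > 0, 0 < τ < α, and β ≥ α/τ + 1/η. Then the function f is quasiconvex on the interval [1, ∞). -/

import Mathlib

open Real Filter

/-!
In fact `f` is antitone on `[1, ∞)`. With `w = (x - 1)ηβ + 1`, `r = η / w`,
`L = log (1 + r)` and `g = τ + L`, one has
`f'(x) = (g^(1-α) - τ^(1-α)) / (1 - α) - x g^(-α) η²β / (w (w + η))`.
A second-order Bernoulli inequality (valid for `0 ≤ α ≤ 2`) gives
`(g^(1-α) - τ^(1-α)) / (1 - α) ≤ g^(-α) (L + α L² / (2τ))`, and the logarithmic bounds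
`L + L²/2 ≤ r` (Taylor) and `L² (1 + r) ≤ r²` (i.e. `t ≤ 2 sinh (t/2)`) turn `f' ≤ 0`
into the rational inequality `1 + η (α/τ + 1) / 2 ≤ ηβ`, which follows from
`β ≥ α/τ + 1/η` and `τ ≤ α`.
-/

/-- The function `f` from the paper (Eq. (33)):
`f(x) = x·(τ + log(1 + η/((x−1)ηβ + 1)))^(1−α)/(1−α) − (x−1)·τ^(1−α)/(1−α)`. -/
noncomputable def f (α τ η β : ℝ) : ℝ → ℝ := fun x =>
  x * (τ + Real.log (1 + η / ((x - 1) * η * β + 1))) ^ (1 - α) / (1 - α)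
    - (x - 1) * τ ^ (1 - α) / (1 - α)

theorem rpow_one_add_sub_one_div_le {p h : ℝ} (hp : p ≤ 1) (hp0 : p ≠ 0) (hh : -1 < h) :
    ((1 + h) ^ p - 1) / p ≤ h := by
  rcases hp0.lt_or_gt with hneg | hpos
  · have hlog : log (1 + h) ≤ h := by linarith [log_le_sub_one_of_pos (by linarith : 0 < 1 + h)]
    have hexp : 1 + log (1 + h) * p ≤ (1 + h) ^ p := by
      rw [rpow_def_of_pos (by linarith)]; linarith [add_one_le_exp (log (1 + h) * p)]
    rw [div_le_iff_of_neg hneg]; nlinarith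
  · rw [div_le_iff₀ hpos]
    linarith [rpow_one_add_le_one_add_mul_self hh.le hpos.le hp]

theorem one_add_sub_rpow_div_one_sub_le {α h : ℝ} (hα0 : 0 ≤ α) (hα2 : α ≤ 2) (hα1 : α ≠ 1)
    (hh : 0 ≤ h) : ((1 + h) - (1 + h) ^ α) / (1 - α) ≤ h + α / 2 * h ^ 2 := by
  set D : ℝ → ℝ := fun x => x + α / 2 * x ^ 2 - ((1 + x) - (1 + x) ^ α) / (1 - α)
  have hD : ∀ x, 0 ≤ x → HasDerivAt D
      (1 + α / 2 * (2 * x) - (1 - α * (1 + x) ^ (α - 1)) / (1 - α)) x := by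
    intro x hx
    have hpow : HasDerivAt (fun x => (1 + x) ^ α) (α * (1 + x) ^ (α - 1)) x := by
      simpa using ((hasDerivAt_id' x).const_add 1).rpow_const (p := α) (Or.inl (by linarith))
    exact ((hasDerivAt_id x).add ((hasDerivAt_pow 2 x).const_mul (α / 2))).sub
      ((((hasDerivAt_id x).const_add 1).sub hpow).div_const (1 - α)) |>.congr_deriv (by simp)
  have hmono : MonotoneOn D (Set.Ici 0) := by
    refine monotoneOn_of_hasDerivWithinAt_nonneg (convex_Ici 0)
      (fun x hx => (hD x hx).continuousAt.continuousWithinAt)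
      (fun x hx => (hD x (interior_subset hx)).hasDerivWithinAt) ?_
    intro x hx
    rw [interior_Ici] at hx
    have hbern := rpow_one_add_sub_one_div_le (p := α - 1) (by linarith) (sub_ne_zero.2 hα1)
      (by linarith [hx.out] : -1 < x)
    have h1α : (1 : ℝ) - α ≠ 0 := sub_ne_zero.2 hα1.symm
    have hα1' : α - 1 ≠ 0 := sub_ne_zero.2 hα1
    have : 1 + α / 2 * (2 * x) - (1 - α * (1 + x) ^ (α - 1)) / (1 - α)
        = α * (x - ((1 + x) ^ (α - 1) - 1) / (α - 1)) := by
      field_simp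
      ring
    rw [this]
    exact mul_nonneg hα0 (by linarith)
  have := hmono Set.self_mem_Ici hh hh
  simp only [D] at this
  norm_num at this
  linarith

theorem add_rpow_one_sub_sub_rpow_one_sub_div_le {α τ L : ℝ} (hα0 : 0 ≤ α) (hα2 : α ≤ 2)
    (hα1 : α ≠ 1) (hτ : 0 < τ) (hL : 0 ≤ L) :
    ((τ + L) ^ (1 - α) - τ ^ (1 - α)) / (1 - α) ≤ (τ + L) ^ (-α) * (L + α / (2 * τ) * L ^ 2) := by
  have hg : 0 < τ + L := by linarith
  have hself : (τ + L) ^ (-α) * (τ + L) = (τ + L) ^ (1 - α) := by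
    rw [sub_eq_neg_add, rpow_add hg, rpow_one]
  have hrel : τ * (1 + L / τ) ^ α = (τ + L) ^ α * τ ^ (1 - α) := by
    rw [show 1 + L / τ = (τ + L) / τ by field_simp, div_rpow hg.le hτ.le, rpow_sub hτ, rpow_one]
    field_simp
  have hpow : (τ + L) ^ (1 - α) - τ ^ (1 - α)
      = (τ + L) ^ (-α) * (τ * ((1 + L / τ) - (1 + L / τ) ^ α)) := by
    rw [mul_sub τ, hrel, mul_add, mul_one, mul_div_cancel₀ _ hτ.ne', mul_sub, hself, ← mul_assoc,
      rpow_neg hg.le, inv_mul_cancel₀ (rpow_pos_of_pos hg _).ne', one_mul]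
  rw [hpow, mul_div_assoc]
  refine mul_le_mul_of_nonneg_left ?_ (rpow_nonneg hg.le _)
  calc τ * (1 + L / τ - (1 + L / τ) ^ α) / (1 - α)
      ≤ τ * (L / τ + α / 2 * (L / τ) ^ 2) := by
        rw [mul_div_assoc]
        exact mul_le_mul_of_nonneg_left
          (one_add_sub_rpow_div_one_sub_le hα0 hα2 hα1 (by positivity)) hτ.le
    _ = L + α / (2 * τ) * L ^ 2 := by field_simp

theorem sq_mul_exp_le_sq_exp_sub_one {t : ℝ} (ht : 0 ≤ t) : t ^ 2 * exp t ≤ (exp t - 1) ^ 2 := by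
  have hsinh : t / 2 ≤ sinh (t / 2) := self_le_sinh_iff.2 (by linarith)
  have hhalf : exp t = exp (t / 2) ^ 2 := by rw [← exp_nat_mul]; ring_nf
  have : exp t - 1 = 2 * sinh (t / 2) * exp (t / 2) := by
    rw [sinh_eq, hhalf, exp_neg]; field_simp
  rw [this, hhalf]
  have hpos := exp_pos (t / 2)
  have : t * exp (t / 2) ≤ 2 * sinh (t / 2) * exp (t / 2) := by gcongr; linarith
  nlinarith [mul_nonneg ht hpos.le]

theorem sq_log_one_add_mul_le {r : ℝ} (hr : 0 ≤ r) : log (1 + r) ^ 2 * (1 + r) ≤ r ^ 2 := by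
  have h := sq_mul_exp_le_sq_exp_sub_one (log_nonneg (by linarith : (1 : ℝ) ≤ 1 + r))
  rwa [exp_log (by linarith), add_sub_cancel_left] at h

theorem log_one_add_add_mul_sq_le {k r : ℝ} (hk : 1 ≤ k) (hr : 0 ≤ r) :
    log (1 + r) + k / 2 * log (1 + r) ^ 2 ≤ r + (k - 1) / 2 * (r ^ 2 / (1 + r)) := by
  have hquad := quadratic_le_exp_of_nonneg (log_nonneg (by linarith : (1 : ℝ) ≤ 1 + r))
  rw [exp_log (by linarith)] at hquad
  have hsq : log (1 + r) ^ 2 ≤ r ^ 2 / (1 + r) := by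
    rw [le_div_iff₀ (by linarith)]; exact sq_log_one_add_mul_le hr
  nlinarith [mul_le_mul_of_nonneg_left hsq (by linarith : 0 ≤ (k - 1) / 2)]

section
variable {α τ η β x w : ℝ}

theorem hasDerivAt_f (hα1 : α ≠ 1) (hτ : 0 < τ) (hη : 0 < η) (hw : w = (x - 1) * η * β + 1)
    (hw0 : 0 < w) :
    HasDerivAt (f α τ η β) (((τ + log (1 + η / w)) ^ (1 - α) - τ ^ (1 - α)) / (1 - α)
      - x * (τ + log (1 + η / w)) ^ (-α) * (η ^ 2 * β / (w * (w + η)))) x := by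
  have hr : 0 < 1 + η / w := by positivity
  have hg : τ + log (1 + η / w) ≠ 0 := by
    linarith [log_nonneg (by linarith [div_pos hη hw0] : (1 : ℝ) ≤ 1 + η / w)]
  have hwx : HasDerivAt (fun y => (y - 1) * η * β + 1) (η * β) x := by
    simpa using (((hasDerivAt_id' x).sub_const 1).mul_const η).mul_const β |>.add_const 1
  rw [hw] at hw0 hr hg
  have hlog : HasDerivAt (fun y => τ + log (1 + η / ((y - 1) * η * β + 1)))
      (-(η * (η * β)) / ((x - 1) * η * β + 1) ^ 2 / (1 + η / ((x - 1) * η * β + 1))) x :=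
    ((((hasDerivAt_const x η).div hwx hw0.ne').const_add 1).log hr.ne').const_add τ
      |>.congr_deriv (by simp only [Pi.div_apply]; ring)
  have := (((hasDerivAt_id' x).mul (hlog.rpow_const (p := 1 - α) (Or.inl hg))).div_const
    (1 - α)).sub ((((hasDerivAt_id' x).sub_const 1).mul_const (τ ^ (1 - α))).div_const (1 - α))
  rw [← hw] at this hw0
  refine this.congr_deriv ?_
  have h1α : (1 : ℝ) - α ≠ 0 := sub_ne_zero.2 hα1.symm
  rw [show (1 : ℝ) - α - 1 = -α by ring]
  field_simp
  ring

theorem rpow_log_one_add_sub_le (hα0 : 0 ≤ α) (hα2 : α ≤ 2) (hα1 : α ≠ 1) (hτ0 : 0 < τ)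
    (hτα : τ ≤ α) (hη : 0 < η) (hβ : β ≥ α / τ + 1 / η) (hw : w = (x - 1) * η * β + 1)
    (hw0 : 0 < w) :
    ((τ + log (1 + η / w)) ^ (1 - α) - τ ^ (1 - α)) / (1 - α)
      ≤ x * (τ + log (1 + η / w)) ^ (-α) * (η ^ 2 * β / (w * (w + η))) := by
  have hk : 1 ≤ α / τ := (one_le_div hτ0).2 hτα
  have hr : 0 ≤ η / w := by positivity
  have hL : 0 ≤ log (1 + η / w) := log_nonneg (by linarith)
  have hηβ : α / τ * η + 1 ≤ η * β := by
    have := mul_le_mul_of_nonneg_left hβ hη.le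
    rwa [mul_add, mul_one_div_cancel hη.ne', mul_comm] at this
  have hrational : η / w + (α / τ - 1) / 2 * ((η / w) ^ 2 / (1 + η / w))
      ≤ x * (η ^ 2 * β / (w * (w + η))) := by
    have hwη : 0 < w + η := by linarith
    have hxηβ : x * (η ^ 2 * β) = η * (w - 1 + η * β) := by rw [hw]; ring
    calc η / w + (α / τ - 1) / 2 * ((η / w) ^ 2 / (1 + η / w))
        = (η * (w + η) + (α / τ - 1) / 2 * η ^ 2) / (w * (w + η)) := by field_simp
      _ ≤ η * (w - 1 + η * β) / (w * (w + η)) := by gcongr; nlinarith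
      _ = x * (η ^ 2 * β / (w * (w + η))) := by rw [← hxηβ, mul_div_assoc]
  calc ((τ + log (1 + η / w)) ^ (1 - α) - τ ^ (1 - α)) / (1 - α)
      ≤ (τ + log (1 + η / w)) ^ (-α) * (log (1 + η / w) + α / τ / 2 * log (1 + η / w) ^ 2) := by
        rw [div_div, mul_comm τ]
        exact add_rpow_one_sub_sub_rpow_one_sub_div_le hα0 hα2 hα1 hτ0 hL
    _ ≤ (τ + log (1 + η / w)) ^ (-α) * (x * (η ^ 2 * β / (w * (w + η)))) := by
        refine mul_le_mul_of_nonneg_left ?_ (rpow_nonneg (by linarith) _)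
        exact (log_one_add_add_mul_sq_le hk hr).trans hrational
    _ = x * (τ + log (1 + η / w)) ^ (-α) * (η ^ 2 * β / (w * (w + η))) := by ring

theorem antitoneOn_f (hα0 : 0 ≤ α) (hα2 : α ≤ 2) (hα1 : α ≠ 1) (hη : 0 < η) (hτ0 : 0 < τ)
    (hτα : τ ≤ α) (hβ : β ≥ α / τ + 1 / η) : AntitoneOn (f α τ η β) (Set.Ici 1) := by
  have hβ0 : 0 < β := lt_of_lt_of_le (by positivity) hβ
  have hw0 : ∀ x ∈ Set.Ici (1 : ℝ), 0 < (x - 1) * η * β + 1 := fun x hx => by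
    have : 0 ≤ x - 1 := sub_nonneg.2 hx
    positivity
  have hderiv := fun x hx => hasDerivAt_f (β := β) (x := x) hα1 hτ0 hη rfl (hw0 x hx)
  refine antitoneOn_of_deriv_nonpos (convex_Ici 1)
    (fun x hx => (hderiv x hx).continuousAt.continuousWithinAt)
    (fun x hx => (hderiv x (interior_subset hx)).differentiableAt.differentiableWithinAt)
    (fun x hx => ?_)
  rw [(hderiv x (interior_subset hx)).deriv, sub_nonpos]
  exact rpow_log_one_add_sub_le hα0 hα2 hα1 hτ0 hτα hη hβ rfl (hw0 x (interior_subset hx))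

end

/-- for α ∈ (0,2), α ≠ 1, 0 < τ < α and β ≥ α/τ + 1/η,
the function f is quasiconvex on [1, ∞). -/
theorem stmt_3 (α τ η β : ℝ) (hα0 : 0 < α) (hα2 : α < 2) (hα1 : α ≠ 1)
    (hη : 0 < η) (hτ0 : 0 < τ) (hτα : τ < α)
    (hβ : β ≥ α / τ + 1 / η) :
    QuasiconvexOn ℝ (Set.Ici (1 : ℝ)) (f α τ η β) :=
  (antitoneOn_f hα0.le hα2.le hα1 hη hτ0 hτα.le hβ).quasiconvexOn (convex_Ici 1)
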